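/- arXiv:1005.5579 — 6 statements merged into one kernel-verified Lean document; each statement's English description precedes it below -/
import Mathlib

section
/- Let β ∈ ℚ with β ≠ 1 and β ≠ −1, and let k, l be distinct positive coprime integers. Let F(X, Y, Z) = l·X·(X + (β−1)Z)·(X + (β+1)Z) − k·Y·(Y + (β−1)Z)·(Y + (β+1)Z), the homogenization of the generalized Holm curve H_β. Then the projective plane cubic F = 0 is smooth: there is no nonzero triple (X, Y, Z) ∈ ℂ³ at which all three partial derivatives ∂F/∂X, ∂F/∂Y, ∂F/∂Z vanish simultaneously. -/
/-- The homogenization of the generalized Holm curve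
`H_β : l·x·(x+β−1)·(x+β+1) = k·y·(y+β−1)·(y+β+1)`, as a function on `ℂ³`. -/
noncomputable def holmHomog (β : ℚ) (k l : ℕ) (X Y Z : ℂ) : ℂ :=
  (l : ℂ) * X * (X + ((β : ℂ) - 1) * Z) * (X + ((β : ℂ) + 1) * Z) -
    (k : ℂ) * Y * (Y + ((β : ℂ) - 1) * Z) * (Y + ((β : ℂ) + 1) * Z)

/-!
Write `g(t, z) = t (t + (β − 1) z) (t + (β + 1) z)`, so the cubic is `l·g(X, Z) − k·g(Y, Z)`.
At a singular point `X` and `Y` are critical points of `g(·, Z)`, and the `Z`-derivative then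
says that the critical values satisfy `l·g(X, Z) = k·g(Y, Z)`. If `Z = 0` this forces
`X = Y = 0`. If `X = Y`, then `k ≠ l` makes `X` a double root of `g(·, Z)`, which `β ≠ ±1`
excludes. Otherwise `X` and `Y` are the two critical points, and the two critical values have real
sum and negative product `−4 (β² − 1)² Z⁶ / 27` (the discriminant of `g` divided by `−27`): they
are real of opposite signs, so their ratio cannot be `k / l > 0`.
-/

namespace HolmCurve

section Obstruction

variable {R : Type*} [CommRing R]

def obstruction (b k l : R) : R :=
  27 * (k + l) ^ 2 * (b ^ 2 - 1) ^ 2 + 4 * k * l * b ^ 2 * (b ^ 2 - 9) ^ 2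

theorem map_obstruction {S : Type*} [CommRing S] (f : R →+* S) (b k l : R) :
    f (obstruction b k l) = obstruction (f b) (f k) (f l) := by
  simp [obstruction, map_ofNat]

theorem obstruction_pos [LinearOrder R] [IsStrictOrderedRing R] {b k l : R} (hb : b ^ 2 ≠ 1)
    (hk : 0 < k) (hl : 0 < l) : 0 < obstruction b k l := by
  have hb' : b ^ 2 - 1 ≠ 0 := sub_ne_zero.2 hb
  unfold obstruction
  positivity

end Obstruction

section Algebra

variable {K : Type*} [Field K] (b t z : K)

def cubic : K := t * (t + (b - 1) * z) * (t + (b + 1) * z)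

def cubicDerivT : K := 3 * t ^ 2 + 4 * b * t * z + (b ^ 2 - 1) * z ^ 2

def cubicDerivZ : K := 2 * b * t ^ 2 + 2 * (b ^ 2 - 1) * t * z

/-- Where `cubicDerivT b t z = 0`, we have `9 · cubic b t z = -2 z² · critForm b t z`, so
`critForm` is a scaled critical value of `cubic b · z`. -/
def critForm : K := (b ^ 2 + 3) * t + b * (b ^ 2 - 1) * z

theorem three_mul_cubicDerivZ :
    3 * cubicDerivZ b t z = 2 * b * cubicDerivT b t z - 2 * z * critForm b t z := by
  unfold cubicDerivZ cubicDerivT critForm; ring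

variable {b t z}

theorem vieta_of_cubicDerivT_eq_zero {x y : K} (hx : cubicDerivT b x z = 0)
    (hy : cubicDerivT b y z = 0) (hxy : x ≠ y) :
    3 * (x + y) = -4 * b * z ∧ 3 * (x * y) = (b ^ 2 - 1) * z ^ 2 := by
  unfold cubicDerivT at hx hy
  have hsum : 3 * (x + y) + 4 * b * z = 0 := by
    have h : (x - y) * (3 * (x + y) + 4 * b * z) = 0 := by linear_combination hx - hy
    exact (mul_eq_zero.1 h).resolve_left (sub_ne_zero.2 hxy)
  exact ⟨by linear_combination hsum, by linear_combination x * hsum - hx⟩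

variable [CharZero K]

theorem eq_zero_of_cubicDerivT_zero_eq_zero (h : cubicDerivT b t 0 = 0) : t = 0 := by
  unfold cubicDerivT at h
  simpa using h

theorem eq_zero_of_critForm_eq_zero (hb : b ^ 2 ≠ 1) (hD : cubicDerivT b t z = 0)
    (hL : critForm b t z = 0) : z = 0 := by
  have h : 9 * ((b ^ 2 - 1) * z) ^ 2 = 0 := by
    unfold cubicDerivT at hD; unfold critForm at hL
    linear_combination (3 * (b ^ 2 + 3) * t + b * (b ^ 2 + 15) * z) * hL - (b ^ 2 + 3) ^ 2 * hD
  simpa [sub_eq_zero, hb] using h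

theorem mul_critForm_eq_of_cubicDerivZ {k l x y : K} (hz : z ≠ 0) (hx : cubicDerivT b x z = 0)
    (hy : cubicDerivT b y z = 0) (h : l * cubicDerivZ b x z - k * cubicDerivZ b y z = 0) :
    l * critForm b x z = k * critForm b y z := by
  have hx' := three_mul_cubicDerivZ b x z
  have hy' := three_mul_cubicDerivZ b y z
  rw [hx, mul_zero, zero_sub] at hx'
  rw [hy, mul_zero, zero_sub] at hy'
  have h2 : (-2 * z) * (l * critForm b x z - k * critForm b y z) = 0 := by
    linear_combination 3 * h - l * hx' + k * hy'
  exact sub_eq_zero.1 ((mul_eq_zero.1 h2).resolve_left (by simpa using hz))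

theorem sq_mul_obstruction_eq_zero {k l x y : K} (hx : cubicDerivT b x z = 0)
    (hy : cubicDerivT b y z = 0) (hxy : x ≠ y) (h : l * critForm b x z = k * critForm b y z) :
    z ^ 2 * obstruction b k l = 0 := by
  obtain ⟨hsum, hprod⟩ := vieta_of_cubicDerivT_eq_zero hx hy hxy
  set u := critForm b x z
  set v := critForm b y z
  have hLsum : 3 * (u + v) = 2 * b * (b ^ 2 - 9) * z := by
    unfold u v critForm; linear_combination (b ^ 2 + 3) * hsum
  have hLprod : u * v = -3 * (b ^ 2 - 1) ^ 2 * z ^ 2 := by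
    unfold u v critForm
    linear_combination ((b ^ 2 + 3) ^ 2 * hprod + b * (b ^ 2 - 1) * (b ^ 2 + 3) * z * hsum) / 3
  unfold obstruction
  -- `k l (u + v)² − (k + l)² u v = (l u − k v) (k u − l v)`
  linear_combination 9 * (k + l) ^ 2 * hLprod
    - k * l * (3 * (u + v) + 2 * b * (b ^ 2 - 9) * z) * hLsum + 9 * (k * u - l * v) * h

end Algebra

section Derivatives

variable {𝕜 : Type*} [NontriviallyNormedField 𝕜] (b t z : 𝕜)

theorem hasDerivAt_cubic_left : HasDerivAt (fun t => cubic b t z) (cubicDerivT b t z) t :=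
  (((hasDerivAt_id' t).mul ((hasDerivAt_id' t).add_const ((b - 1) * z))).mul
    ((hasDerivAt_id' t).add_const ((b + 1) * z))).congr_deriv
    (by unfold cubicDerivT; simp only [Pi.mul_apply]; ring)

theorem hasDerivAt_cubic_right : HasDerivAt (fun z => cubic b t z) (cubicDerivZ b t z) z :=
  ((((hasDerivAt_id' z).const_mul (b - 1)).const_add t).const_mul t |>.mul
    (((hasDerivAt_id' z).const_mul (b + 1)).const_add t)).congr_deriv
    (by unfold cubicDerivZ; ring)

end Derivatives

end HolmCurve

open HolmCurve

theorem holmHomog_eq (β : ℚ) (k l : ℕ) (X Y Z : ℂ) :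
    holmHomog β k l X Y Z = l * cubic (β : ℂ) X Z - k * cubic (β : ℂ) Y Z := by
  unfold holmHomog cubic; ring

theorem hasDerivAt_holmHomog_X (β : ℚ) (k l : ℕ) (X Y Z : ℂ) :
    HasDerivAt (fun X' => holmHomog β k l X' Y Z) (l * cubicDerivT (β : ℂ) X Z) X := by
  simp only [holmHomog_eq]
  exact ((hasDerivAt_cubic_left _ _ _).const_mul _).sub_const _

theorem hasDerivAt_holmHomog_Y (β : ℚ) (k l : ℕ) (X Y Z : ℂ) :
    HasDerivAt (fun Y' => holmHomog β k l X Y' Z) (-(k * cubicDerivT (β : ℂ) Y Z)) Y := by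
  simp only [holmHomog_eq]
  exact ((hasDerivAt_cubic_left _ _ _).const_mul _).const_sub _

theorem hasDerivAt_holmHomog_Z (β : ℚ) (k l : ℕ) (X Y Z : ℂ) :
    HasDerivAt (fun Z' => holmHomog β k l X Y Z')
      (l * cubicDerivZ (β : ℂ) X Z - k * cubicDerivZ (β : ℂ) Y Z) Z := by
  simp only [holmHomog_eq]
  exact ((hasDerivAt_cubic_right _ _ _).const_mul _).sub
    ((hasDerivAt_cubic_right _ _ _).const_mul _)

theorem holm_curve_smooth_general (β : ℚ) (hβ1 : β ≠ 1) (hβ2 : β ≠ -1)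
    (k l : ℕ) (hk : 0 < k) (hl : 0 < l) (hne : k ≠ l) :
    ¬ ∃ X Y Z : ℂ, (X, Y, Z) ≠ (0, 0, 0) ∧
      deriv (fun X' => holmHomog β k l X' Y Z) X = 0 ∧
      deriv (fun Y' => holmHomog β k l X Y' Z) Y = 0 ∧
      deriv (fun Z' => holmHomog β k l X Y Z') Z = 0 := by
  rintro ⟨X, Y, Z, hXYZ, hX, hY, hZ⟩
  rw [(hasDerivAt_holmHomog_X ..).deriv] at hX
  rw [(hasDerivAt_holmHomog_Y ..).deriv, neg_eq_zero] at hY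
  rw [(hasDerivAt_holmHomog_Z ..).deriv] at hZ
  have hβ : β ^ 2 ≠ 1 := sq_ne_one_iff.2 ⟨hβ1, hβ2⟩
  have hDX : cubicDerivT (β : ℂ) X Z = 0 :=
    (mul_eq_zero.1 hX).resolve_left (Nat.cast_ne_zero.2 hl.ne')
  have hDY : cubicDerivT (β : ℂ) Y Z = 0 :=
    (mul_eq_zero.1 hY).resolve_left (Nat.cast_ne_zero.2 hk.ne')
  obtain rfl | hZ0 := eq_or_ne Z 0
  · simp [eq_zero_of_cubicDerivT_zero_eq_zero hDX, eq_zero_of_cubicDerivT_zero_eq_zero hDY] at hXYZ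
  have hcrit := mul_critForm_eq_of_cubicDerivZ hZ0 hDX hDY hZ
  obtain rfl | hXY := eq_or_ne X Y
  · have hL : critForm (β : ℂ) X Z = 0 :=
      (mul_eq_mul_right_iff.1 hcrit).resolve_left (by exact_mod_cast hne.symm)
    exact hZ0 (eq_zero_of_critForm_eq_zero (by exact_mod_cast hβ) hDX hL)
  · have h := (mul_eq_zero.1 (sq_mul_obstruction_eq_zero hDX hDY hXY hcrit)).resolve_left
      (pow_ne_zero 2 hZ0)
    have hQ : obstruction β k l = 0 := by
      apply (Rat.castHom ℂ).injective
      rw [map_obstruction, map_zero]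
      simpa using h
    exact (obstruction_pos hβ (by positivity) (by positivity)).ne' hQ

/-- For `β ∈ ℚ` with `β ≠ ±1` and distinct positive coprime integers `k, l`, the
projective plane cubic obtained by homogenizing the generalized Holm curve `H_β` is
smooth: there is no nonzero `(X, Y, Z) ∈ ℂ³` at which all three partial derivatives of
the defining cubic vanish simultaneously. -/
theorem holm_curve_smooth (β : ℚ) (hβ1 : β ≠ 1) (hβ2 : β ≠ -1)
    (k l : ℕ) (hk : 0 < k) (hl : 0 < l) (hne : k ≠ l) (hkl : Nat.Coprime k l) :
    ¬ ∃ X Y Z : ℂ, (X, Y, Z) ≠ (0, 0, 0) ∧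
      deriv (fun X' => holmHomog β k l X' Y Z) X = 0 ∧
      deriv (fun Y' => holmHomog β k l X Y' Z) Y = 0 ∧
      deriv (fun Z' => holmHomog β k l X Y Z') Z = 0 :=
  holm_curve_smooth_general β hβ1 hβ2 k l hk hl hne
end

section
/- Let β, k, l ∈ ℚ. Suppose (x, y) ∈ ℚ² satisfies l·x·(x+β−1)·(x+β+1) = k·y·(y+β−1)·(y+β+1) and l·x ≠ k·y. Define X = k·l·(−3·l·y + k·(3x + 6β − (3x+4y)·β² − 6β³) + l·β·(−6 + 4xβ + 3β(y+2β))) / (3·l·x − 3·k·y) and Y = −k·l·(k−l)·(β²−1)·(k·l·(x−y)·(1 + 2(x+y)β + 3β²) − l²·x·(−1 + β(x+β)) + k²·y·(−1 + β(y+β))) / (l·x − k·y)². Then Y² = X³ − (1/3)·k²·l²·(3+β²)²·X + (1/27)·k²·l²·(2·k·l·β²·(β²−9)² + 27·k²·(β²−1)² + 27·l²·(β²−1)²); that is, (X, Y) is a rational point of the Jacobian curve E_β. -/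
/-!
Put `D = l·x − k·y` and let `U`, `V` be the numerators in `X = U / (3D)`, `Y = −V / D²`.
Writing `E_β` as `Y² = X³ − a·X + b`, clearing denominators turns its equation into
`27·V² = D·U³ − 9a·D³·U + 27b·D⁴`. This is not an identity, but the difference of the two
sides is a polynomial multiple of `l·x·(x+β−1)·(x+β+1) − k·y·(y+β−1)·(y+β+1)`; the
cofactor used in `cleared_weierstrass_of_holm` was found by multivariate division.
-/

namespace HolmCurve

variable {R : Type*} [CommRing R] (β k l x y : R)

def numX : R :=
  k * l * (-3 * l * y + k * (3 * x + 6 * β - (3 * x + 4 * y) * β ^ 2 - 6 * β ^ 3)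
    + l * β * (-6 + 4 * x * β + 3 * β * (y + 2 * β)))

def numY : R :=
  k * l * (k - l) * (β ^ 2 - 1) *
    (k * l * (x - y) * (1 + 2 * (x + y) * β + 3 * β ^ 2)
      - l ^ 2 * x * (-1 + β * (x + β)) + k ^ 2 * y * (-1 + β * (y + β)))

variable {β k l x y} in
theorem cleared_weierstrass_of_holm
    (hH : l * x * (x + β - 1) * (x + β + 1) = k * y * (y + β - 1) * (y + β + 1)) :
    27 * numY β k l x y ^ 2 =
      (l * x - k * y) * numX β k l x y ^ 3
        - 3 * k ^ 2 * l ^ 2 * (3 + β ^ 2) ^ 2 * (l * x - k * y) ^ 3 * numX β k l x y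
        + k ^ 2 * l ^ 2 * (2 * k * l * β ^ 2 * (β ^ 2 - 9) ^ 2 + 27 * k ^ 2 * (β ^ 2 - 1) ^ 2
            + 27 * l ^ 2 * (β ^ 2 - 1) ^ 2) * (l * x - k * y) ^ 4 := by
  unfold numX numY
  linear_combination 27 * k ^ 2 * l ^ 2 * (k - l) ^ 2 * (β ^ 2 - 1) ^ 2 *
    ((β ^ 2 * (k - l) ^ 2 - (k + l) ^ 2) * (l * x - k * y)
      + 4 * k * l * β ^ 2 * (k - l) * (x + y + 2 * β)) * hH

end HolmCurve

theorem weierstrass_of_cleared_denominators {K : Type*} [Field K] (h3 : (3 : K) ≠ 0)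
    {a b D U V : K} (hD : D ≠ 0)
    (h : 27 * V ^ 2 = D * U ^ 3 - 9 * a * D ^ 3 * U + 27 * b * D ^ 4) :
    (V / D ^ 2) ^ 2 = (U / (3 * D)) ^ 3 - a * (U / (3 * D)) + b := by
  field_simp
  linear_combination h

/-- The rational transformation `(x, y) ↦ (X, Y)` maps rational points of the
generalized Holm curve `H_β : l·x·(x+β−1)·(x+β+1) = k·y·(y+β−1)·(y+β+1)` with
`l·x ≠ k·y` to rational points of its Jacobian
`E_β : Y² = X³ − (1/3)k²l²(3+β²)²·X + (1/27)k²l²(2klβ²(β²−9)² + 27k²(β²−1)² + 27l²(β²−1)²)`. -/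
theorem holm_to_jacobian (β k l x y X Y : ℚ)
    (hH : l * x * (x + β - 1) * (x + β + 1) = k * y * (y + β - 1) * (y + β + 1))
    (hxy : l * x ≠ k * y)
    (hX : X = k * l * (-3 * l * y + k * (3 * x + 6 * β - (3 * x + 4 * y) * β ^ 2 - 6 * β ^ 3)
        + l * β * (-6 + 4 * x * β + 3 * β * (y + 2 * β))) / (3 * l * x - 3 * k * y))
    (hY : Y = -(k * l * (k - l) * (β ^ 2 - 1) *
        (k * l * (x - y) * (1 + 2 * (x + y) * β + 3 * β ^ 2)
          - l ^ 2 * x * (-1 + β * (x + β)) + k ^ 2 * y * (-1 + β * (y + β)))) /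
        (l * x - k * y) ^ 2) :
    Y ^ 2 = X ^ 3 - (1 / 3) * k ^ 2 * l ^ 2 * (3 + β ^ 2) ^ 2 * X +
      (1 / 27) * k ^ 2 * l ^ 2 *
        (2 * k * l * β ^ 2 * (β ^ 2 - 9) ^ 2 + 27 * k ^ 2 * (β ^ 2 - 1) ^ 2 +
          27 * l ^ 2 * (β ^ 2 - 1) ^ 2) := by
  have hX' : X = HolmCurve.numX β k l x y / (3 * (l * x - k * y)) := by
    rw [hX, HolmCurve.numX]; ring
  have hY' : Y ^ 2 = (HolmCurve.numY β k l x y / (l * x - k * y) ^ 2) ^ 2 := by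
    rw [hY, HolmCurve.numY, neg_div, neg_sq]
  rw [hY', hX']
  apply weierstrass_of_cleared_denominators three_ne_zero (sub_ne_zero.mpr hxy)
  linear_combination HolmCurve.cleared_weierstrass_of_holm hH
end

section
/- Let k, l be distinct positive integers and let β ∈ ℝ with β ≠ 1 and β ≠ −1. Then the cubic polynomial f(X) = X³ − (1/3)·k²·l²·(3+β²)²·X + (1/27)·k²·l²·(2·k·l·β²·(β²−9)² + 27·k²·(β²−1)² + 27·l²·(β²−1)²) has exactly one real root; equivalently, the group of real points of the elliptic curve E_β : Y² = f(X) contains exactly one element of order 2, i.e., E_β(ℝ)[2] ≅ ℤ/2ℤ. -/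
/-!
A depressed cubic `x³ + px + q` over `ℝ` always has a real root, and two distinct roots `x ≠ y`
force `4p³ + 27q² = -((x - y)(2x + y)(x + 2y))² ≤ 0`; so a positive `4p³ + 27q²` means a unique
real root. For the cubic of `E_β`, `4p³ + 27q²` factors as `k⁴l⁴(β² - 1)²(k - l)²` times a sum of
terms that are nonnegative, one of them strictly positive, when `k, l > 0`.
-/

lemma depressed_cubic_pos_at_bound (p q : ℝ) :
    0 < (1 + |p| + |q|) ^ 3 + p * (1 + |p| + |q|) + q := by
  set b := 1 + |p| + |q|
  have hb : 1 ≤ b := by simp only [b]; linarith [abs_nonneg p, abs_nonneg q]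
  have hcube : b * b ≤ b ^ 3 := by nlinarith
  nlinarith [neg_abs_le p, neg_abs_le q, abs_nonneg q]

lemma exists_root_depressed_cubic (p q : ℝ) : ∃ x : ℝ, x ^ 3 + p * x + q = 0 := by
  set b := 1 + |p| + |q|
  have hpos : 0 < b ^ 3 + p * b + q := depressed_cubic_pos_at_bound p q
  have hneg : (-b) ^ 3 + p * (-b) + q < 0 := by
    have := depressed_cubic_pos_at_bound p (-q)
    rw [abs_neg] at this
    linarith
  have hb : -b ≤ b := neg_le_self (by positivity)
  obtain ⟨x, -, hx⟩ := intermediate_value_Icc hb (by fun_prop : Continuous fun x : ℝ =>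
    x ^ 3 + p * x + q).continuousOn ⟨hneg.le, hpos.le⟩
  exact ⟨x, hx⟩

/-- The third root is `-(x + y)`, so this is the discriminant `∏ (rᵢ - rⱼ)²` up to sign. -/
lemma neg_discr_of_depressed_cubic_roots {p q x y : ℝ} (hxy : x ≠ y)
    (hx : x ^ 3 + p * x + q = 0) (hy : y ^ 3 + p * y + q = 0) :
    -(4 * p ^ 3 + 27 * q ^ 2) = ((x - y) * (2 * x + y) * (x + 2 * y)) ^ 2 := by
  have hp : p = -(x ^ 2 + x * y + y ^ 2) := by
    have hprod : (x - y) * (x ^ 2 + x * y + y ^ 2 + p) = 0 := by linear_combination hx - hy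
    linear_combination (mul_eq_zero.mp hprod).resolve_left (sub_ne_zero.mpr hxy)
  have hq : q = x * y * (x + y) := by linear_combination hx - x * hp
  subst hp hq
  ring

lemma existsUnique_root_depressed_cubic {p q : ℝ} (h : 0 < 4 * p ^ 3 + 27 * q ^ 2) :
    ∃! x : ℝ, x ^ 3 + p * x + q = 0 := by
  obtain ⟨x, hx⟩ := exists_root_depressed_cubic p q
  refine ⟨x, hx, fun y hy => ?_⟩
  by_contra hyx
  have := neg_discr_of_depressed_cubic_roots hyx hy hx
  linarith [sq_nonneg ((y - x) * (2 * y + x) * (y + 2 * x))]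

lemma discr_jacobian_cubic (K L β : ℝ) :
    4 * (-((1 / 3) * K ^ 2 * L ^ 2 * (3 + β ^ 2) ^ 2)) ^ 3 +
      27 * ((1 / 27) * K ^ 2 * L ^ 2 *
        (2 * K * L * β ^ 2 * (β ^ 2 - 9) ^ 2 + 27 * K ^ 2 * (β ^ 2 - 1) ^ 2 +
          27 * L ^ 2 * (β ^ 2 - 1) ^ 2)) ^ 2 =
    K ^ 4 * L ^ 4 * (β ^ 2 - 1) ^ 2 * (K - L) ^ 2 *
      (2 * K * L * β ^ 2 * (β ^ 2 - 9) ^ 2 + 27 * (K ^ 2 + L ^ 2) * (β ^ 2 - 1) ^ 2 +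
        2 * K * L * (3 + β ^ 2) ^ 3) := by
  ring

lemma discr_jacobian_cubic_pos {K L β : ℝ} (hK : 0 < K) (hL : 0 < L) (hKL : K ≠ L)
    (hβ : β ^ 2 ≠ 1) :
    0 < 4 * (-((1 / 3) * K ^ 2 * L ^ 2 * (3 + β ^ 2) ^ 2)) ^ 3 +
      27 * ((1 / 27) * K ^ 2 * L ^ 2 *
        (2 * K * L * β ^ 2 * (β ^ 2 - 9) ^ 2 + 27 * K ^ 2 * (β ^ 2 - 1) ^ 2 +
          27 * L ^ 2 * (β ^ 2 - 1) ^ 2)) ^ 2 := by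
  have hβ' : β ^ 2 - 1 ≠ 0 := sub_ne_zero.mpr hβ
  have hKL' : K - L ≠ 0 := sub_ne_zero.mpr hKL
  rw [discr_jacobian_cubic]
  positivity

/-- For distinct positive integers `k, l` and `β ∈ ℝ` with `β ≠ ±1`, the cubic
`f(X) = X³ − (1/3)k²l²(3+β²)²·X + (1/27)k²l²(2klβ²(β²−9)² + 27k²(β²−1)² + 27l²(β²−1)²)`
has exactly one real root; equivalently, `E_β(ℝ)[2] ≅ ℤ/2ℤ` for the elliptic curve
`E_β : Y² = f(X)`. -/
theorem jacobian_cubic_unique_real_root (k l : ℕ) (hk : 0 < k) (hl : 0 < l) (hne : k ≠ l)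
    (β : ℝ) (hβ1 : β ≠ 1) (hβ2 : β ≠ -1) :
    ∃! X : ℝ, X ^ 3 - (1 / 3) * (k : ℝ) ^ 2 * (l : ℝ) ^ 2 * (3 + β ^ 2) ^ 2 * X +
      (1 / 27) * (k : ℝ) ^ 2 * (l : ℝ) ^ 2 *
        (2 * k * l * β ^ 2 * (β ^ 2 - 9) ^ 2 + 27 * (k : ℝ) ^ 2 * (β ^ 2 - 1) ^ 2 +
          27 * (l : ℝ) ^ 2 * (β ^ 2 - 1) ^ 2) = 0 := by
  have hβ : β ^ 2 ≠ 1 := fun h => (sq_eq_one_iff.mp h).elim hβ1 hβ2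
  have hdisc := discr_jacobian_cubic_pos (Nat.cast_pos.mpr hk) (Nat.cast_pos.mpr hl)
    (Nat.cast_injective.ne hne) hβ
  simpa only [sub_eq_add_neg, neg_mul] using existsUnique_root_depressed_cubic hdisc
end

section
/- Let β, k, l ∈ ℚ with k + l ≠ 0. Then the point (x₀, y₀) = (β·(l−k)/(l+k), −β·(l−k)/(l+k)) satisfies l·(x₀ − β)·(x₀ − 1)·(x₀ + 1) = k·(y₀ − β)·(y₀ − 1)·(y₀ + 1); that is, the tangent line to the curve l·(x−β)(x−1)(x+1) = k·(y−β)(y−1)(y+1) at the point (β, β) meets the curve again in the rational point (β(l−k)/(l+k), −β(l−k)/(l+k)). -/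
/- On the line `y = -x` the two sides of the curve equation differ by
`(x - 1)(x + 1)((l + k)x - β(l - k))`. -/
theorem holm_eq_of_antidiagonal {R : Type*} [CommRing R] {β k l x : R}
    (hx : (l + k) * x = β * (l - k)) :
    l * (x - β) * (x - 1) * (x + 1) = k * (-x - β) * (-x - 1) * (-x + 1) := by
  linear_combination (x - 1) * (x + 1) * hx

/-- The tangent line to the (translated) generalized Holm curve
`l·(x−β)(x−1)(x+1) = k·(y−β)(y−1)(y+1)` at `(β, β)` meets the curve again in the
rational point `(β(l−k)/(l+k), −β(l−k)/(l+k))`: this point satisfies the curve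
equation. -/
theorem holm_tangent_point (β k l : ℚ) (hkl : k + l ≠ 0) :
    l * ((β * (l - k) / (l + k)) - β) * ((β * (l - k) / (l + k)) - 1) *
        ((β * (l - k) / (l + k)) + 1) =
      k * ((-(β * (l - k) / (l + k))) - β) * ((-(β * (l - k) / (l + k))) - 1) *
        ((-(β * (l - k) / (l + k))) + 1) :=
  holm_eq_of_antidiagonal (mul_div_cancel₀ _ (add_comm k l ▸ hkl))
end

section
/- Let θ ∈ (0, π) with cos θ ∈ ℚ, and write cos θ = s/r with r, s coprime integers and r > 0. Let n be a positive squarefree integer. Then n is θ-congruent if and only if there exist x, y ∈ ℚ with y ≠ 0 such that n·y² = x·(x + s/r − 1)·(x + s/r + 1)/r; equivalently, if and only if the elliptic curve E_{n,θ} : n·y² = (1/r)·x·(x + cos θ − 1)·(x + cos θ + 1) has a rational point of order greater than 2. -/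
/-!
Put `t = cos θ`, so that the curve reads `n r y² = x ((x + t)² - 1)`. Triangles with
`ab = 2nr` and `c² = a² + b² - 2abt` give curve points via `x = (a + c - bt) / b`, `y = 2x / b`,
and curve points give triangles via
`a = |(x + t)² - 1| / |y|`, `b = 2|x| / |y|`, `c = (x² + 1 - t²) / |y|`.
Since `0 < θ < π`, `t² < 1`: this keeps the point off the `2`-torsion and makes `c` positive.
-/

/-- A positive squarefree integer `n` is `θ`-congruent (where `cos θ = s / r` with
`r > 0` and `gcd(s, r) = 1`) if `n * r * sin θ` is the area of a triangle with rational
sides and an angle `θ`; equivalently, there are positive rationals `a, b, c` with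
`a * b = 2 * n * r` and `c ^ 2 = a ^ 2 + b ^ 2 - 2 * a * b * (s / r)`. -/
def IsThetaCongruent (r s : ℤ) (n : ℕ) : Prop :=
  ∃ a b c : ℚ, 0 < a ∧ 0 < b ∧ 0 < c ∧
    a * b = 2 * (n : ℚ) * (r : ℚ) ∧
    c ^ 2 = a ^ 2 + b ^ 2 - 2 * a * b * ((s : ℚ) / (r : ℚ))

lemma Real.cos_sq_lt_one_of_pos_of_lt_pi {θ : ℝ} (h0 : 0 < θ) (hπ : θ < Real.pi) :
    Real.cos θ ^ 2 < 1 := by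
  nlinarith [Real.sin_pos_of_pos_of_lt_pi h0 hπ, Real.sin_sq_add_cos_sq θ]

lemma exists_curve_point_of_triangle {K : Type*} [Field K] [NeZero (2 : K)] {n r t a b c : K}
    (hb : b ≠ 0) (hr : r ≠ 0) (ht : t ^ 2 ≠ 1)
    (hab : a * b = 2 * n * r) (hc : c ^ 2 = a ^ 2 + b ^ 2 - 2 * a * b * t) :
    ∃ x y : K, y ≠ 0 ∧ n * y ^ 2 = x * (x + t - 1) * (x + t + 1) / r := by
  have hx : a + c - b * t ≠ 0 := by
    intro h
    have : b ^ 2 * t ^ 2 = b ^ 2 * 1 := by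
      linear_combination hc + (a - b * t - c) * h
    exact ht (mul_left_cancel₀ (pow_ne_zero 2 hb) this)
  refine ⟨(a + c - b * t) / b, 2 * (a + c - b * t) / b ^ 2,
    div_ne_zero (mul_ne_zero two_ne_zero hx) (pow_ne_zero 2 hb), ?_⟩
  rw [eq_div_iff hr]
  field_simp
  linear_combination (-2 * (a + c - b * t)) * hab - b * hc

lemma exists_triangle_of_curve_point {K : Type*} [Field K] [LinearOrder K] [IsStrictOrderedRing K]
    {n r t x y : K} (hn : 0 < n) (hr : 0 < r) (ht : t ^ 2 < 1) (hy : y ≠ 0)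
    (hxy : n * y ^ 2 = x * (x + t - 1) * (x + t + 1) / r) :
    ∃ a b c : K, 0 < a ∧ 0 < b ∧ 0 < c ∧
      a * b = 2 * n * r ∧ c ^ 2 = a ^ 2 + b ^ 2 - 2 * a * b * t := by
  rw [eq_div_iff hr.ne'] at hxy
  have hcurve : n * r * |y| ^ 2 = x * ((x + t) ^ 2 - 1) := by
    rw [sq_abs]; linear_combination hxy
  have hpos : 0 < x * ((x + t) ^ 2 - 1) := by
    rw [← hcurve]; positivity
  have hx : x ≠ 0 := left_ne_zero_of_mul hpos.ne'
  have hD : (x + t) ^ 2 - 1 ≠ 0 := right_ne_zero_of_mul hpos.ne'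
  have habs : |x| * |(x + t) ^ 2 - 1| = x * ((x + t) ^ 2 - 1) := by
    rw [← abs_mul, abs_of_pos hpos]
  refine ⟨|(x + t) ^ 2 - 1| / |y|, 2 * |x| / |y|, (x ^ 2 + 1 - t ^ 2) / |y|,
    by positivity, by positivity, div_pos (by nlinarith [sq_nonneg x]) (abs_pos.mpr hy), ?_, ?_⟩
  · field_simp
    linear_combination habs - hcurve
  · field_simp
    linear_combination -sq_abs ((x + t) ^ 2 - 1) - 4 * sq_abs x + 4 * t * habs

theorem fujiwara_theta_congruent_iff_general
    (θ : ℝ) (hθ0 : 0 < θ) (hθπ : θ < Real.pi)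
    (r s : ℤ) (hr : 0 < r)
    (hcos : Real.cos θ = (s : ℝ) / (r : ℝ))
    (n : ℕ) (hn : 0 < n) :
    IsThetaCongruent r s n ↔
      ∃ x y : ℚ, y ≠ 0 ∧ (n : ℚ) * y ^ 2 =
        x * (x + (s : ℚ) / (r : ℚ) - 1) * (x + (s : ℚ) / (r : ℚ) + 1) / (r : ℚ) := by
  have hr' : (0 : ℚ) < r := by exact_mod_cast hr
  have hn' : (0 : ℚ) < n := by exact_mod_cast hn
  have ht : ((s : ℚ) / r) ^ 2 < 1 := by
    have := Real.cos_sq_lt_one_of_pos_of_lt_pi hθ0 hθπ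
    rw [hcos] at this
    exact_mod_cast this
  constructor
  · rintro ⟨a, b, c, -, hb, -, hab, hc⟩
    exact exists_curve_point_of_triangle hb.ne' hr'.ne' ht.ne hab hc
  · rintro ⟨x, y, hy, hxy⟩
    exact exists_triangle_of_curve_point hn' hr' ht hy hxy

/-- (Fujiwara) A positive squarefree integer `n` is `θ`-congruent if and only if the
elliptic curve `E_{n,θ} : n·y² = (1/r)·x·(x + cos θ − 1)·(x + cos θ + 1)` has a rational
point of order greater than `2`, i.e. an affine rational point `(x, y)` with `y ≠ 0`. -/
theorem fujiwara_theta_congruent_iff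
    (θ : ℝ) (hθ0 : 0 < θ) (hθπ : θ < Real.pi)
    (r s : ℤ) (hr : 0 < r) (hrs : Int.gcd s r = 1)
    (hcos : Real.cos θ = (s : ℝ) / (r : ℝ))
    (n : ℕ) (hn : 0 < n) (hnsf : Squarefree n) :
    IsThetaCongruent r s n ↔
      ∃ x y : ℚ, y ≠ 0 ∧ (n : ℚ) * y ^ 2 =
        x * (x + (s : ℚ) / (r : ℚ) - 1) * (x + (s : ℚ) / (r : ℚ) + 1) / (r : ℚ) :=
  fujiwara_theta_congruent_iff_general θ hθ0 hθπ r s hr hcos n hn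
end

section
/- Let θ ∈ (0, π) with cos θ ∈ ℚ, and write cos θ = s/r (so −1 < s/r < 1) with r, s coprime integers and r > 0; set β = s/r. Let x ∈ ℚ and set A = x·(x+β−1)·(x+β+1)/r. If A > 0, then the squarefree part of A, i.e., the unique squarefree positive integer N such that A/N is the square of a rational number, is a θ-congruent number. -/
lemma theta_triangle_identity {K : Type*} [CommRing K] {n R S X Y : K}
    (hY : Y ^ 2 = X * ((X - n * (R - S)) * (X + n * (R + S)))) :
    (X ^ 2 + n ^ 2 * (R ^ 2 - S ^ 2)) ^ 2 =
      ((X - n * (R - S)) * (X + n * (R + S))) ^ 2 + (2 * n * R * X) ^ 2 - 4 * n * S * Y ^ 2 := by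
  linear_combination (4 * n * S) * hY

lemma exists_theta_triangle_of_curve_point {K : Type*} [Field K] [LinearOrder K]
    [IsStrictOrderedRing K] {n R S X Y : K} (hn : 0 < n) (hR : 0 < R)
    (hS : S ^ 2 < R ^ 2) (hY : Y ≠ 0)
    (hXY : Y ^ 2 = X * ((X - n * (R - S)) * (X + n * (R + S)))) :
    ∃ a b c : K, 0 < a ∧ 0 < b ∧ 0 < c ∧ a * b = 2 * n * R ∧
      c ^ 2 = a ^ 2 + b ^ 2 - 2 * a * b * (S / R) := by
  have hcurve := theta_triangle_identity hXY
  set P := (X - n * (R - S)) * (X + n * (R + S))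
  have hX : X ≠ 0 := by rintro rfl; simp [hY] at hXY
  have hP : P ≠ 0 := by rintro hP; simp [hP, hY] at hXY
  have hPX : |P| * |X| = Y ^ 2 := by rw [← abs_mul, mul_comm, ← hXY, abs_sq]
  have hab : |P| / |Y| * (2 * n * R * |X| / |Y|) = 2 * n * R := by
    field_simp
    rw [sq_abs, ← hPX]
  refine ⟨|P| / |Y|, 2 * n * R * |X| / |Y|, (X ^ 2 + n ^ 2 * (R ^ 2 - S ^ 2)) / |Y|,
    by positivity, by positivity, ?_, hab, ?_⟩
  · have : 0 < R ^ 2 - S ^ 2 := sub_pos.mpr hS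
    positivity
  · rw [mul_assoc 2 (|P| / |Y|), hab]
    simp only [div_pow, mul_pow, sq_abs]
    field_simp
    linear_combination hcurve

lemma sq_lt_sq_of_cos_eq_div {θ : ℝ} (h0 : 0 < θ) (hπ : θ < Real.pi) {r s : ℤ} (hr : 0 < r)
    (hcos : Real.cos θ = (s : ℝ) / r) : (s : ℚ) ^ 2 < (r : ℚ) ^ 2 := by
  have h := Real.cos_sq_lt_one_of_pos_of_lt_pi h0 hπ
  rw [hcos, div_pow, div_lt_one (by positivity)] at h
  exact_mod_cast h

lemma curve_point_of_eq_mul_sq {r s N x t : ℚ} (hr : r ≠ 0)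
    (hA : x * (x + s / r - 1) * (x + s / r + 1) / r = N * t ^ 2) :
    (N ^ 2 * r ^ 2 * t) ^ 2 =
      N * r * x * ((N * r * x - N * (r - s)) * (N * r * x + N * (r + s))) := by
  field_simp at hA
  linear_combination (-N ^ 3 * r) * hA

theorem squarefree_part_is_theta_congruent_general
    (θ : ℝ) (hθ0 : 0 < θ) (hθπ : θ < Real.pi)
    (r s : ℤ) (hr : 0 < r)
    (hcos : Real.cos θ = (s : ℝ) / (r : ℝ))
    (β : ℚ) (hβ : β = (s : ℚ) / (r : ℚ))
    (x A : ℚ) (hA : A = x * (x + β - 1) * (x + β + 1) / (r : ℚ)) (hApos : 0 < A)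
    (N : ℕ)
    (hNsq : ∃ t : ℚ, A = (N : ℚ) * t ^ 2) :
    IsThetaCongruent r s N := by
  obtain ⟨t, ht⟩ := hNsq
  have hr' : (0 : ℚ) < r := by exact_mod_cast hr
  have hN : (0 : ℚ) < N := pos_of_mul_pos_left (ht ▸ hApos) (sq_nonneg t)
  have ht0 : t ≠ 0 := by rintro rfl; simp [ht] at hApos
  subst hβ
  exact exists_theta_triangle_of_curve_point hN hr' (sq_lt_sq_of_cos_eq_div hθ0 hθπ hr hcos)
    (by positivity) (curve_point_of_eq_mul_sq hr'.ne' (hA ▸ ht))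

/-- Let `θ ∈ (0, π)` with `cos θ = s/r ∈ ℚ` and set `β = s/r`. For `x ∈ ℚ`, if
`A = x·(x+β−1)·(x+β+1)/r > 0`, then the squarefree part of `A` is a `θ`-congruent
number. -/
theorem squarefree_part_is_theta_congruent
    (θ : ℝ) (hθ0 : 0 < θ) (hθπ : θ < Real.pi)
    (r s : ℤ) (hr : 0 < r) (hrs : Int.gcd s r = 1)
    (hcos : Real.cos θ = (s : ℝ) / (r : ℝ))
    (β : ℚ) (hβ : β = (s : ℚ) / (r : ℚ))
    (x A : ℚ) (hA : A = x * (x + β - 1) * (x + β + 1) / (r : ℚ)) (hApos : 0 < A)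
    (N : ℕ) (hNpos : 0 < N) (hNsf : Squarefree N)
    (hNsq : ∃ t : ℚ, A = (N : ℚ) * t ^ 2) :
    IsThetaCongruent r s N :=
  squarefree_part_is_theta_congruent_general θ hθ0 hθπ r s hr hcos β hβ x A hA hApos N hNsq
end
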